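/- arXiv:1510.01000 — 2 statements merged into one kernel-verified Lean document; each statement's English description precedes it below -/
import Mathlib

section
/- Let K be a field of characteristic zero and R = K[[t]]. If φ ∈ R^n is a solution of a differential polynomial P ∈ R{x_1,...,x_n} (i.e., P(φ) = 0), then trop(φ) = (Supp(φ_1),...,Supp(φ_n)) is a solution of the tropical differential polynomial trop(P). -/
/-- Formal derivative of a power series. -/
noncomputable def pd {K : Type*} [Semiring K] (φ : PowerSeries K) : PowerSeries K :=
  PowerSeries.mk fun k => ((k + 1 : ℕ) : K) * PowerSeries.coeff (k + 1) φ

/-- Support of a power series. -/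
def suppS {K : Type*} [Semiring K] (φ : PowerSeries K) : Set ℕ :=
  {k | PowerSeries.coeff k φ ≠ 0}

/-- t-adic valuation of a power series, with value `⊤` at `0`. -/
noncomputable def pval {K : Type*} [Semiring K] (φ : PowerSeries K) : ℕ∞ :=
  sInf ((fun k : ℕ => (k : ℕ∞)) '' suppS φ)

/-- `Val_S(j) = min{s ∈ S : s ≥ j} − j`, or `⊤` if `S ∩ Z_{≥j} = ∅`. -/
noncomputable def ValS (S : Set ℕ) (j : ℕ) : ℕ∞ :=
  sInf ((fun s : ℕ => ((s - j : ℕ) : ℕ∞)) '' {s ∈ S | j ≤ s})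

/-- Tropical evaluation of the differential monomial with exponent matrix `m`:
`ε_m(S) = Σ m_{ij} · Val_{S_i}(j)`. -/
noncomputable def eps {n : ℕ} (m : (Fin n × ℕ) →₀ ℕ) (S : Fin n → Set ℕ) : ℕ∞ :=
  m.sum fun v k => (k : ℕ∞) * ValS (S v.1) v.2

/-- Value at `S` of the tropicalization of a differential polynomial:
`min over monomials m of val(ψ_m) + ε_m(S)`. -/
noncomputable def tropVal {K : Type*} [CommSemiring K] {n : ℕ}
    (P : MvPolynomial (Fin n × ℕ) (PowerSeries K)) (S : Fin n → Set ℕ) : ℕ∞ :=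
  sInf ((fun m => pval (MvPolynomial.coeff m P) + eps m S) '' (P.support : Set ((Fin n × ℕ) →₀ ℕ)))

/-- `S` is a solution of `trop(P)`: the minimum is `⊤` or is attained at two distinct monomials. -/
noncomputable def isTropSol {K : Type*} [CommSemiring K] {n : ℕ}
    (P : MvPolynomial (Fin n × ℕ) (PowerSeries K)) (S : Fin n → Set ℕ) : Prop :=
  tropVal P S = ⊤ ∨
    ∃ m₁ ∈ P.support, ∃ m₂ ∈ P.support, m₁ ≠ m₂ ∧
      pval (MvPolynomial.coeff m₁ P) + eps m₁ S = tropVal P S ∧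
      pval (MvPolynomial.coeff m₂ P) + eps m₂ S = tropVal P S

/-- The derivation on the ring of differential polynomials `R{x_1,…,x_n}`,
extending the derivation `d` on `R`, with `d(x_{ij}) = x_{i(j+1)}`. -/
noncomputable def dPoly {R : Type*} [CommRing R] (d : R → R) {n : ℕ}
    (P : MvPolynomial (Fin n × ℕ) R) : MvPolynomial (Fin n × ℕ) R :=
  ((AddMonoidAlgebra.coeff P).sum fun m c => MvPolynomial.monomial m (d c)) +
    ∑ v ∈ P.vars, MvPolynomial.X (v.1, v.2 + 1) * MvPolynomial.pderiv v P

/-- Evaluation of a differential polynomial at a tuple of power series: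
substitute `x_{ij} ↦ d^j φ_i`. -/
noncomputable def evalDP {K : Type*} [CommRing K] {n : ℕ} (φ : Fin n → PowerSeries K)
    (P : MvPolynomial (Fin n × ℕ) (PowerSeries K)) : PowerSeries K :=
  MvPolynomial.eval (fun v => pd^[v.2] (φ v.1)) P

/-- The bijection `Ψ : K^{Z≥0} → K[[t]]`, `Ψ(a) = Σ a_j t^j / j!`. -/
noncomputable def Psi {K : Type*} [Field K] (a : ℕ → K) : PowerSeries K :=
  PowerSeries.mk fun j => a j / (j.factorial : K)

/-- The Zariski topology on affine `N`-space over `K`. -/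
def zariskiT (N : ℕ) (K : Type*) [CommRing K] : TopologicalSpace (Fin N → K) :=
  TopologicalSpace.generateFrom
    {U | ∃ p : MvPolynomial (Fin N) K, U = {x | MvPolynomial.eval x p ≠ 0}}

/-- A constructible set: a finite union of locally closed sets. -/
def IsConstructibleIn {X : Type*} (τ : TopologicalSpace X) (C : Set X) : Prop :=
  ∃ (r : ℕ) (U Z : Fin r → Set X),
    (∀ i, @IsOpen X τ (U i)) ∧ (∀ i, @IsClosed X τ (Z i)) ∧ C = ⋃ i, U i ∩ Z i

/-!
Each monomial `M` of `P` contributes to `P(φ)` the term `ψ_M ∏ (d^j φ_i)^{M_ij}`, whose `t`-adic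
order is `val(ψ_M) + ε_M(trop φ)`: in characteristic zero `d^j` shifts the support of `φ_i` down
by `j`, and orders add under products. These terms sum to `0`, so a term of minimal finite order
cannot be the only one: its lowest nonzero coefficient would survive in the sum.
-/

open PowerSeries

theorem PowerSeries.exists_ne_order_eq_of_sum_eq_zero {R ι : Type*} [Semiring R] {s : Finset ι}
    {f : ι → R⟦X⟧} (hsum : ∑ j ∈ s, f j = 0) {i : ι} (hi : i ∈ s)
    (hmin : ∀ j ∈ s, (f i).order ≤ (f j).order) (hfi : f i ≠ 0) :
    ∃ j ∈ s, j ≠ i ∧ (f j).order = (f i).order := by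
  by_contra! hne
  have hlt : ∀ j ∈ s, j ≠ i → ((f i).order.toNat : ℕ∞) < (f j).order := fun j hj hji => by
    rw [coe_toNat_order hfi]
    exact (hmin j hj).lt_of_ne (hne j hj hji).symm
  apply coeff_order hfi
  calc coeff (f i).order.toNat (f i) = coeff (f i).order.toNat (∑ j ∈ s, f j) := by
        rw [map_sum, Finset.sum_eq_single_of_mem i hi fun j hj hji =>
          coeff_of_lt_order _ (hlt j hj hji)]
    _ = 0 := by rw [hsum, map_zero]

theorem pval_eq_order {K : Type*} [Semiring K] (f : K⟦X⟧) : pval f = f.order := by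
  cases h : f.order with
  | top =>
    rw [order_eq_top] at h
    simp [h, pval, suppS]
  | coe N =>
    rw [order_eq_nat] at h
    refine le_antisymm (sInf_le ⟨N, h.1, rfl⟩) (le_sInf ?_)
    rintro _ ⟨k, hk, rfl⟩
    exact Nat.cast_le.mpr (not_lt.mp fun hlt => hk (h.2 k hlt))

section
variable {K : Type*} [CommSemiring K] [NoZeroDivisors K] [CharZero K]

theorem mem_suppS_pd {f : K⟦X⟧} {k : ℕ} : k ∈ suppS (pd f) ↔ k + 1 ∈ suppS f := by
  simp [suppS, pd, Nat.cast_add_one_ne_zero]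

theorem mem_suppS_iterate_pd {f : K⟦X⟧} {j k : ℕ} : k ∈ suppS (pd^[j] f) ↔ k + j ∈ suppS f := by
  induction j generalizing f with
  | zero => rfl
  | succ j ih => rw [Function.iterate_succ_apply, ih, mem_suppS_pd, add_assoc]

theorem order_iterate_pd (f : K⟦X⟧) (j : ℕ) : (pd^[j] f).order = ValS (suppS f) j := by
  rw [← pval_eq_order, pval, ValS]
  congr 1
  ext x
  constructor
  · rintro ⟨k, hk, rfl⟩
    exact ⟨k + j, ⟨mem_suppS_iterate_pd.mp hk, Nat.le_add_left _ _⟩, by simp⟩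
  · rintro ⟨s, ⟨hs, hj⟩, rfl⟩
    exact ⟨s - j, by rwa [mem_suppS_iterate_pd, Nat.sub_add_cancel hj], rfl⟩

theorem order_coeff_mul_prod_iterate_pd {n : ℕ} (P : MvPolynomial (Fin n × ℕ) K⟦X⟧)
    (φ : Fin n → K⟦X⟧) (m : (Fin n × ℕ) →₀ ℕ) :
    (MvPolynomial.coeff m P * ∏ v ∈ m.support, (pd^[v.2] (φ v.1)) ^ m v).order =
      pval (MvPolynomial.coeff m P) + eps m (fun i => suppS (φ i)) := by
  simp only [order_mul, order_prod, order_pow, order_iterate_pd, nsmul_eq_mul, pval_eq_order]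
  rfl

end

/-- If `φ` is a solution of `P` then `trop(φ)` is a solution of `trop(P)`. -/
theorem stmt8 {K : Type*} [Field K] [CharZero K] {n : ℕ}
    (P : MvPolynomial (Fin n × ℕ) (PowerSeries K)) (φ : Fin n → PowerSeries K)
    (h : evalDP φ P = 0) :
    isTropSol P (fun i => suppS (φ i)) := by
  set c := fun m => pval (MvPolynomial.coeff m P) + eps m (fun i => suppS (φ i))
  rcases eq_or_ne (tropVal P _) ⊤ with hT | hT
  · exact Or.inl hT
  have hne : (c '' P.support).Nonempty := by
    contrapose! hT
    rw [tropVal, hT, sInf_empty]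
  obtain ⟨m₁, hm₁, hc₁⟩ : tropVal P _ ∈ c '' P.support := csInf_mem hne
  set t := fun m => MvPolynomial.coeff m P * ∏ v ∈ m.support, (pd^[v.2] (φ v.1)) ^ m v
  have hsum : ∑ m ∈ P.support, t m = 0 := (MvPolynomial.eval_eq _ P).symm.trans h
  have ht : ∀ m, (t m).order = c m := order_coeff_mul_prod_iterate_pd P φ
  obtain ⟨m₂, hm₂, hne₂, ho₂⟩ := exists_ne_order_eq_of_sum_eq_zero hsum hm₁
    (fun m hm => by rw [ht, ht, hc₁]; exact sInf_le ⟨m, hm, rfl⟩)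
    (fun h0 => hT (by rw [← hc₁, ← ht, h0, order_zero]))
  rw [ht, ht] at ho₂
  exact Or.inr ⟨m₁, hm₁, m₂, hm₂, hne₂.symm, hc₁, ho₂.trans hc₁⟩
end

section
/- Let K be an algebraically closed field of characteristic zero, R = K[[t]], and let g = E_M + h + tλ ∈ R{x_1,...,x_n}, where E_M is a differential monomial with exponent matrix M, h ∈ K[x_{ij}] is a polynomial all of whose monomials contain some variable x_{ij} with j ∉ S_i, and λ ∈ R{x_1,...,x_n} is arbitrary. If M_{ij} ≠ 0 implies j ∈ S_i for the n-tuple S = (S_1,...,S_n) of subsets of Z_{≥0}, then trop(g)(S) = 0 and the minimum in trop(g)(S) is attained only at the monomial ε_M; consequently S is not a solution of trop(g). -/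
/-! The monomial `E_M` has coefficient `1 + t·(…)`, of valuation `0`, and `ε_M(S) = 0` since `M`
only involves variables `x_{ij}` with `j ∈ S_i`. Every other monomial either has a coefficient in
`t·K[[t]]`, or comes from `h` and so contains some `x_{ij}` with `j ∉ S_i`, forcing `ε ≥ 1`.
Hence `0` is the minimum of `trop(g)(S)` and it is attained only at `M`. -/

open MvPolynomial

section Valuations

variable {K : Type*} [Semiring K]

lemma pval_eq_zero_of_constantCoeff_ne_zero {φ : PowerSeries K}
    (h : PowerSeries.constantCoeff φ ≠ 0) : pval φ = 0 :=
  nonpos_iff_eq_zero.mp <| sInf_le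
    ⟨0, by rwa [suppS, Set.mem_ofPred_eq, PowerSeries.coeff_zero_eq_constantCoeff_apply], rfl⟩

lemma one_le_pval_of_constantCoeff_eq_zero {φ : PowerSeries K}
    (h : PowerSeries.constantCoeff φ = 0) : 1 ≤ pval φ := by
  refine le_sInf ?_
  rintro _ ⟨k, hk, rfl⟩
  have hk0 : k ≠ 0 := by
    rintro rfl
    exact hk (by rwa [PowerSeries.coeff_zero_eq_constantCoeff_apply])
  show (1 : ℕ∞) ≤ k
  exact_mod_cast Nat.one_le_iff_ne_zero.mpr hk0

end Valuations

lemma ValS_eq_zero_of_mem {S : Set ℕ} {j : ℕ} (h : j ∈ S) : ValS S j = 0 :=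
  nonpos_iff_eq_zero.mp <| sInf_le ⟨j, ⟨h, le_rfl⟩, by simp⟩

lemma one_le_ValS_of_notMem {S : Set ℕ} {j : ℕ} (h : j ∉ S) : 1 ≤ ValS S j := by
  refine le_sInf ?_
  rintro _ ⟨s, ⟨hs, hjs⟩, rfl⟩
  have hjs' : j < s := lt_of_le_of_ne hjs fun e => h (e ▸ hs)
  show (1 : ℕ∞) ≤ (s - j : ℕ)
  exact_mod_cast Nat.sub_pos_of_lt hjs'

section Eps

variable {n : ℕ} {m : (Fin n × ℕ) →₀ ℕ} {S : Fin n → Set ℕ}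

lemma eps_eq_zero_of_forall_mem (h : ∀ v : Fin n × ℕ, m v ≠ 0 → v.2 ∈ S v.1) :
    eps m S = 0 :=
  Finset.sum_eq_zero fun v hv => by
    simp only [ValS_eq_zero_of_mem (h v (Finsupp.mem_support_iff.mp hv)), mul_zero]

lemma one_le_eps_of_mem_support {v : Fin n × ℕ} (hv : v ∈ m.support) (hvS : v.2 ∉ S v.1) :
    1 ≤ eps m S :=
  calc (1 : ℕ∞) = 1 * 1 := (one_mul 1).symm
    _ ≤ (m v : ℕ∞) * ValS (S v.1) v.2 :=
      mul_le_mul' (by exact_mod_cast Nat.one_le_iff_ne_zero.mpr (Finsupp.mem_support_iff.mp hv))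
        (one_le_ValS_of_notMem hvS)
    _ ≤ eps m S :=
      Finset.single_le_sum (f := fun v => (m v : ℕ∞) * ValS (S v.1) v.2) (fun _ _ => zero_le) hv

end Eps

section TropicalSolutions

variable {K : Type*} [CommSemiring K] {n : ℕ} {P : MvPolynomial (Fin n × ℕ) (PowerSeries K)}
  {S : Fin n → Set ℕ} {M : (Fin n × ℕ) →₀ ℕ}

lemma tropVal_eq_zero_of_mem_support (hM : M ∈ P.support)
    (h : pval (coeff M P) + eps M S = 0) : tropVal P S = 0 :=
  nonpos_iff_eq_zero.mp <| sInf_le ⟨M, hM, h⟩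

lemma not_isTropSol_of_unique_zero (hM : M ∈ P.support) (h : pval (coeff M P) + eps M S = 0)
    (hpos : ∀ m ∈ P.support, m ≠ M → 0 < pval (coeff m P) + eps m S) :
    ¬ isTropSol P S := by
  have htrop := tropVal_eq_zero_of_mem_support hM h
  rintro (htop | ⟨m₁, hm₁, m₂, hm₂, hne, he₁, he₂⟩)
  · exact ENat.zero_ne_top (htrop ▸ htop)
  · rw [htrop] at he₁ he₂
    rcases eq_or_ne m₁ M with rfl | h₁
    · exact (hpos m₂ hm₂ hne.symm).ne' he₂
    · exact (hpos m₁ hm₁ h₁).ne' he₁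

end TropicalSolutions

lemma constantCoeff_coeff_monomial_add_map_add_X_mul {K : Type*} [CommSemiring K] {σ : Type*}
    (M m : σ →₀ ℕ) (h : MvPolynomial σ K) (lam : MvPolynomial σ (PowerSeries K)) :
    PowerSeries.constantCoeff (coeff m (monomial M (1 : PowerSeries K) +
      map (PowerSeries.C (R := K)) h + C PowerSeries.X * lam)) = coeff m (monomial M 1 + h) := by
  classical
  simp only [coeff_add, coeff_map, coeff_C_mul, map_add, map_mul, PowerSeries.constantCoeff_X,
    zero_mul, add_zero, PowerSeries.constantCoeff_C]
  rw [coeff_monomial, coeff_monomial, apply_ite PowerSeries.constantCoeff, map_one, map_zero]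

theorem stmt19_general {K : Type*} [Field K] {n : ℕ}
    (M : (Fin n × ℕ) →₀ ℕ) (S : Fin n → Set ℕ)
    (hM : ∀ v : Fin n × ℕ, M v ≠ 0 → v.2 ∈ S v.1)
    (h0 : MvPolynomial (Fin n × ℕ) K)
    (hh : ∀ m ∈ h0.support, ∃ v ∈ m.support, v.2 ∉ S v.1)
    (lam : MvPolynomial (Fin n × ℕ) (PowerSeries K)) :
    let g := MvPolynomial.monomial M (1 : PowerSeries K) +
      MvPolynomial.map (PowerSeries.C (R := K)) h0 + MvPolynomial.C PowerSeries.X * lam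
    tropVal g S = 0 ∧
    (∀ m ∈ g.support, m ≠ M → 0 < pval (MvPolynomial.coeff m g) + eps m S) ∧
    ¬ isTropSol g S := by
  intro g
  have hh0M : coeff M h0 = 0 := by
    by_contra hh0M
    obtain ⟨v, hv, hvS⟩ := hh M (mem_support_iff.mpr hh0M)
    exact hvS (hM v (Finsupp.mem_support_iff.mp hv))
  have hconst : ∀ m, PowerSeries.constantCoeff (coeff m g) = coeff m (monomial M 1 + h0) :=
    fun m => constantCoeff_coeff_monomial_add_map_add_X_mul M m h0 lam
  have hconstM : PowerSeries.constantCoeff (coeff M g) ≠ 0 := by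
    simp [hconst, hh0M]
  have hMg : M ∈ g.support :=
    mem_support_iff.mpr fun h => hconstM (by rw [h, map_zero])
  have hzero : pval (coeff M g) + eps M S = 0 := by
    rw [pval_eq_zero_of_constantCoeff_ne_zero hconstM, eps_eq_zero_of_forall_mem hM, add_zero]
  have hpos : ∀ m ∈ g.support, m ≠ M → 0 < pval (coeff m g) + eps m S := by
    intro m _ hne
    refine zero_lt_one.trans_le ?_
    by_cases hm : coeff m h0 = 0
    · refine (one_le_pval_of_constantCoeff_eq_zero ?_).trans le_self_add
      simp [hconst, coeff_monomial, Ne.symm hne, hm]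
    · obtain ⟨v, hv, hvS⟩ := hh m (mem_support_iff.mpr hm)
      exact (one_le_eps_of_mem_support hv hvS).trans le_add_self
  exact ⟨tropVal_eq_zero_of_mem_support hMg hzero, hpos,
    not_isTropSol_of_unique_zero hMg hzero hpos⟩

/-- For `g = E_M + h + tλ` with every monomial of `h` containing a variable `x_{ij}`
with `j ∉ S_i`, and `M_{ij} ≠ 0 → j ∈ S_i`: `trop(g)(S) = 0`, the minimum is attained
only at `ε_M`, and `S` is not a solution of `trop(g)`. -/
theorem stmt19 {K : Type*} [Field K] [CharZero K] [IsAlgClosed K] {n : ℕ}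
    (M : (Fin n × ℕ) →₀ ℕ) (S : Fin n → Set ℕ)
    (hM : ∀ v : Fin n × ℕ, M v ≠ 0 → v.2 ∈ S v.1)
    (h0 : MvPolynomial (Fin n × ℕ) K)
    (hh : ∀ m ∈ h0.support, ∃ v ∈ m.support, v.2 ∉ S v.1)
    (lam : MvPolynomial (Fin n × ℕ) (PowerSeries K)) :
    let g := MvPolynomial.monomial M (1 : PowerSeries K) +
      MvPolynomial.map (PowerSeries.C (R := K)) h0 + MvPolynomial.C PowerSeries.X * lam
    tropVal g S = 0 ∧
    (∀ m ∈ g.support, m ≠ M → 0 < pval (MvPolynomial.coeff m g) + eps m S) ∧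
    ¬ isTropSol g S :=
  stmt19_general M S hM h0 hh lam
end
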